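/- arXiv:1703.05672 — 2 statements merged into one kernel-verified Lean document; each statement's English description precedes it below -/
import Mathlib

section
/- Let events A₁,…,Aₙ in a probability space satisfy Pr(Aᵢ) ≤ p for all i, and suppose each Aᵢ is mutually independent of all but at most D of the other events. If e·p·(D+1) ≤ 1, then Pr(⋂ᵢ Āᵢ) > 0. -/
/-!
The symmetric lemma is a case of the asymmetric one. Writing `B S = ⋂ j ∈ S, (A j)ᶜ`, one shows by strong induction
on `S` that `μ (B S ∩ A i) ≤ x i * μ (B S)` whenever `i ∉ S`: split `S` into the events `A i` is
independent of and its neighbours; independence bounds the numerator, and peeling the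
neighbours off one at a time with the induction hypothesis loses a factor `1 - x j` each. The
chain rule then gives `μ (B univ) ≥ ∏ i, (1 - x i)`. The symmetric case takes `x i = 1 / (D + 2)`,
for which `x (1 - x) ^ D ≥ 1 / (e (D + 1))` because `(1 + 1 / (D + 1)) ^ (D + 1) ≤ e`.
-/

open MeasureTheory ProbabilityTheory Finset

lemma one_div_exp_mul_le_mul_one_sub_pow (D : ℕ) :
    1 / (Real.exp 1 * (D + 1)) ≤ 1 / (D + 2) * (1 - 1 / (D + 2)) ^ D := by
  have he := Real.one_add_inv_pow_le_exp (n := D + 1)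
  set c : ℝ := D + 1 with hc
  have hc0 : 0 < c := by positivity
  have h1 : 1 + c⁻¹ = (c + 1) / c := by field_simp
  have h2 : 1 - 1 / (c + 1) = c / (c + 1) := by field_simp; ring
  push_cast at he
  rw [← hc, h1, div_pow, div_le_iff₀ (by positivity)] at he
  rw [show (D : ℝ) + 2 = c + 1 by ring, h2, div_pow, div_le_iff₀ (by positivity)]
  calc (1 : ℝ) ≤ Real.exp 1 * c ^ (D + 1) / (c + 1) ^ (D + 1) := by
        rw [le_div_iff₀ (by positivity)]; simpa using he
    _ = _ := by field_simp; ring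

section

variable {Ω ι : Type*} [MeasurableSpace Ω] {μ : Measure Ω} {A : ι → Set Ω}

lemma one_sub_mul_le_measureReal_inter_compl [IsFiniteMeasure μ] {s t : Set Ω}
    (ht : MeasurableSet t) {x : ℝ} (h : μ.real (s ∩ t) ≤ x * μ.real s) :
    (1 - x) * μ.real s ≤ μ.real (s ∩ tᶜ) := by
  have := measureReal_inter_add_sdiff (μ := μ) (s := s) ht
  rw [Set.sdiff_eq] at this
  linarith

lemma measureReal_biInter_compl_inter_of_indep {i : ι} {J T : Finset ι} (hTJ : T ⊆ J)
    (hind : Indep (MeasurableSpace.generateFrom {A i})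
      (MeasurableSpace.generateFrom {s | ∃ j ∈ J, s = A j}) μ) :
    μ.real ((⋂ j ∈ T, (A j)ᶜ) ∩ A i) = μ.real (⋂ j ∈ T, (A j)ᶜ) * μ.real (A i) := by
  have hT : MeasurableSet[MeasurableSpace.generateFrom {s | ∃ j ∈ J, s = A j}]
      (⋂ j ∈ T, (A j)ᶜ) :=
    Finset.measurableSet_biInter _ fun j hj =>
      (MeasurableSpace.measurableSet_generateFrom
        (show A j ∈ {s | ∃ j ∈ J, s = A j} from ⟨j, hTJ hj, rfl⟩)).compl
  have hi : MeasurableSet[MeasurableSpace.generateFrom {A i}] (A i) :=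
    MeasurableSpace.measurableSet_generateFrom rfl
  simp only [measureReal_def, (Indep_iff _ _ μ).1 hind.symm _ _ hT hi, ENNReal.toReal_mul]

variable [IsFiniteMeasure μ] [DecidableEq ι]

lemma prod_one_sub_mul_le_measureReal_biInter_compl_union (hA : ∀ i, MeasurableSet (A i))
    {x : ι → ℝ} (hx : ∀ i, x i ≤ 1) {T U : Finset ι} (hTU : Disjoint T U)
    (h : ∀ j ∈ U, ∀ V ⊆ T ∪ U, j ∉ V →
      μ.real ((⋂ k ∈ V, (A k)ᶜ) ∩ A j) ≤ x j * μ.real (⋂ k ∈ V, (A k)ᶜ)) :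
    (∏ j ∈ U, (1 - x j)) * μ.real (⋂ k ∈ T, (A k)ᶜ) ≤ μ.real (⋂ k ∈ T ∪ U, (A k)ᶜ) := by
  induction U using Finset.induction_on with
  | empty => simp
  | @insert j U hjU ih =>
    have hjTU : j ∉ T ∪ U := by
      simp [hjU, Finset.disjoint_right.1 hTU (mem_insert_self j U)]
    have hstep := one_sub_mul_le_measureReal_inter_compl (hA j)
      (h j (mem_insert_self j U) (T ∪ U) (union_subset_union_right (subset_insert j U)) hjTU)
    have ih' := ih (disjoint_of_subset_right (subset_insert j U) hTU) fun k hk V hV =>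
      h k (mem_insert_of_mem hk) V (hV.trans (union_subset_union_right (subset_insert j U)))
    rw [prod_insert hjU, union_insert, set_biInter_insert, Set.inter_comm, mul_assoc]
    exact (mul_le_mul_of_nonneg_left ih' (sub_nonneg.2 (hx j))).trans hstep

section

variable [Fintype ι] (hA : ∀ i, MeasurableSet (A i)) {x : ι → ℝ} (hx₀ : ∀ i, 0 ≤ x i)
  (hx₁ : ∀ i, x i ≤ 1) (J : ι → Finset ι)
  (hind : ∀ i, Indep (MeasurableSpace.generateFrom {A i})
    (MeasurableSpace.generateFrom {s | ∃ j ∈ J i, s = A j}) μ)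
  (hle : ∀ i, μ.real (A i) ≤ x i * ∏ j ∈ univ \ insert i (J i), (1 - x j))
include hA hx₀ hx₁ hind hle

lemma measureReal_biInter_compl_inter_le (S : Finset ι) :
    ∀ i ∉ S, μ.real ((⋂ j ∈ S, (A j)ᶜ) ∩ A i) ≤ x i * μ.real (⋂ j ∈ S, (A j)ᶜ) := by
  induction S using Finset.strongInduction with
  | H S ih =>
  intro i hiS
  have hsplit : S ∩ J i ∪ S \ J i = S := by rw [union_comm, sdiff_union_inter]
  have hpeel : (∏ j ∈ S \ J i, (1 - x j)) * μ.real (⋂ j ∈ S ∩ J i, (A j)ᶜ)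
      ≤ μ.real (⋂ j ∈ S, (A j)ᶜ) := by
    have := prod_one_sub_mul_le_measureReal_biInter_compl_union (μ := μ) hA hx₁
      (disjoint_sdiff_inter S (J i)).symm fun j hj V hV hjV => ?_
    · rwa [hsplit] at this
    rw [hsplit] at hV
    exact ih V (ssubset_of_subset_of_ne hV fun h => hjV (h ▸ (mem_sdiff.1 hj).1)) j hjV
  have hneighbours : ∏ j ∈ univ \ insert i (J i), (1 - x j) ≤ ∏ j ∈ S \ J i, (1 - x j) := by
    refine prod_le_prod_of_subset_of_le_one (fun j hj => ?_) (fun j _ => sub_nonneg.2 (hx₁ j))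
      (fun j _ _ => sub_le_self 1 (hx₀ j))
    simp only [mem_sdiff, mem_univ, mem_insert, true_and, not_or] at hj ⊢
    exact ⟨fun h => hiS (h ▸ hj.1), hj.2⟩
  calc μ.real ((⋂ j ∈ S, (A j)ᶜ) ∩ A i)
      ≤ μ.real ((⋂ j ∈ S ∩ J i, (A j)ᶜ) ∩ A i) := by
        refine measureReal_mono (Set.inter_subset_inter_left _ ?_)
        exact Set.biInter_subset_biInter_left (coe_subset.2 inter_subset_left)
    _ = μ.real (⋂ j ∈ S ∩ J i, (A j)ᶜ) * μ.real (A i) :=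
        measureReal_biInter_compl_inter_of_indep inter_subset_right (hind i)
    _ ≤ μ.real (⋂ j ∈ S ∩ J i, (A j)ᶜ) * (x i * ∏ j ∈ S \ J i, (1 - x j)) := by
        gcongr
        exact (hle i).trans (mul_le_mul_of_nonneg_left hneighbours (hx₀ i))
    _ ≤ x i * μ.real (⋂ j ∈ S, (A j)ᶜ) := by
        rw [mul_comm, mul_assoc]
        exact mul_le_mul_of_nonneg_left hpeel (hx₀ i)

theorem prod_one_sub_mul_le_measureReal_iInter_compl :
    (∏ i, (1 - x i)) * μ.real Set.univ ≤ μ.real (⋂ i, (A i)ᶜ) := by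
  have := prod_one_sub_mul_le_measureReal_biInter_compl_union hA hx₁ (disjoint_empty_left univ)
    fun j _ V _ hjV => measureReal_biInter_compl_inter_le hA hx₀ hx₁ J hind hle V j hjV
  simpa using this

end

end

/-- symmetric Lovász Local Lemma: If events `A 1, …, A n` each have
probability at most `p`, each `A i` is mutually independent (in the sense of
independence of generated σ-algebras) of all other events except at most `D` of them,
and `e·p·(D+1) ≤ 1`, then `Pr(⋂ i, (A i)ᶜ) > 0`. -/
theorem stmt_8 {Ω : Type*} [MeasurableSpace Ω] (μ : Measure Ω) [IsProbabilityMeasure μ]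
    (n : ℕ) (A : Fin n → Set Ω) (hA : ∀ i, MeasurableSet (A i))
    (p : ℝ) (D : ℕ)
    (hp : ∀ i, μ (A i) ≤ ENNReal.ofReal p)
    (hindep : ∀ i : Fin n, ∃ J : Finset (Fin n), i ∉ J ∧
        (Finset.univ \ insert i J).card ≤ D ∧
        ProbabilityTheory.Indep
          (MeasurableSpace.generateFrom {A i})
          (MeasurableSpace.generateFrom {s : Set Ω | ∃ j ∈ J, s = A j}) μ)
    (hpD : Real.exp 1 * p * (D + 1) ≤ 1) :
    0 < μ (⋂ i, (A i)ᶜ) := by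
  choose J _ hcard hind using hindep
  set x : ℝ := 1 / (D + 2)
  have hx₀ : 0 ≤ x := by positivity
  have hx₁ : x ≤ 1 := div_le_one_of_le₀ (by linarith) (by positivity)
  have hle : ∀ i, μ.real (A i) ≤ x * ∏ _j ∈ univ \ insert i (J i), (1 - x) := by
    intro i
    have hp' : p ≤ x * (1 - x) ^ D := by
      refine le_trans ?_ (one_div_exp_mul_le_mul_one_sub_pow D)
      rw [le_div_iff₀ (by positivity)]
      linarith
    rw [prod_const]
    have hneighbours : x * (1 - x) ^ D ≤ x * (1 - x) ^ #(univ \ insert i (J i)) :=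
      mul_le_mul_of_nonneg_left (pow_le_pow_of_le_one (by linarith) (by linarith) (hcard i)) hx₀
    exact ENNReal.toReal_le_of_le_ofReal (by positivity)
      ((hp i).trans (ENNReal.ofReal_le_ofReal (hp'.trans hneighbours)))
  have hbound := prod_one_sub_mul_le_measureReal_iInter_compl hA (fun _ => hx₀) (fun _ => hx₁) J
    hind hle
  rw [probReal_univ, mul_one] at hbound
  have hpos : 0 < ∏ _i : Fin n, (1 - x) := prod_pos fun _ _ => by
    simp only [x]; rw [sub_pos, div_lt_one (by positivity)]; linarith
  exact (ENNReal.toReal_pos_iff.1 (hpos.trans_le hbound)).1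
end

section
/- Every graph G with maximum degree Δ admits a proper edge colouring using colours from any prescribed set L of Δ+1 integers. -/
/-!
Vizing's argument, for colours from any finite type `α` with every degree `< |α|`, so that every
vertex misses some colour. Edges are coloured one at a time. To colour an uncoloured edge `x y₀`,
take a maximal fan `y₀, …, y_k` at `x`: distinct neighbours of `x` such that the colour of
`x yᵢ₊₁` is missing at `yᵢ`. If some colour `b` missing at `y_k` is also missing at `x`, shift
the fan: give each `x yᵢ` the colour of `x yᵢ₊₁` and `x y_k` the colour `b`. Otherwise, by
maximality, `b` is the colour of some `x yᵢ₊₁` with `i < k`, so `b` is missing at `yᵢ`; let `a`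
be missing at `x`. The edges coloured `a` or `b` form a graph of maximum degree two in which `x`,
`yᵢ` and `y_k` have degree at most one, so its component at `x` cannot contain both `yᵢ` and
`y_k`. Swapping `a` and `b` on that component makes `b` missing at `x`, and also at the end of
one of the fans `y₀, …, yᵢ` and `y₀, …, y_k`, which is then shifted.
-/

open Finset

namespace SimpleGraph

variable {V α : Type*}

lemma ConnectedComponent.card_le_two_of_degree_le_one [Fintype V] {K : SimpleGraph V}
    [DecidableRel K.Adj] (c : K.ConnectedComponent) (hK : ∀ v, K.degree v ≤ 2) {T : Finset V}
    (hT : ∀ v ∈ T, v ∈ c.supp ∧ K.degree v ≤ 1) : #T ≤ 2 := by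
  classical
  set H := K.induce c.supp
  have hdeg (v : c.supp) : H.degree v = K.degree v :=
    degree_induce_of_neighborSet_subset fun w hw => c.mem_supp_of_adj_mem_supp v.2 hw
  have hedges : Fintype.card c.supp ≤ #H.edgeFinset + 1 := by
    have : H.Connected := c.connected_toSimpleGraph
    have := this.card_vert_le_card_edgeSet_add_one
    rwa [Nat.card_eq_fintype_card, Nat.card_eq_fintype_card, ← edgeFinset_card] at this
  -- Degrees sum to twice the number of edges, at least `2 * (#c.supp - 1)` as `c` is connected.
  set T' := T.subtype (· ∈ c.supp)
  have hT' : #T' = #T := by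
    rw [card_subtype, filter_true_of_mem fun v hv => (hT v hv).1]
  have hsum : ∑ v, (H.degree v + if v ∈ T' then 1 else 0) ≤ ∑ _v : c.supp, 2 := by
    refine sum_le_sum fun v _ => ?_
    rw [hdeg]
    split_ifs with hv
    · have := (hT v (mem_subtype.1 hv)).2
      omega
    · exact (hK v).trans (by omega)
  rw [sum_add_distrib, sum_boole, filter_mem_eq_inter, univ_inter, sum_const, card_univ,
    sum_degrees_eq_twice_card_edges, smul_eq_mul, Nat.cast_id] at hsum
  omega

structure PartialEdgeColoring (G : SimpleGraph V) (α : Type*) where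
  color : V → V → Option α
  symm : ∀ u v, color u v = color v u
  adj : ∀ ⦃u v c⦄, color u v = some c → G.Adj u v
  proper : ∀ ⦃u v w c⦄, color u v = some c → color u w = some c → v = w

namespace PartialEdgeColoring

variable {G : SimpleGraph V} (C : PartialEdgeColoring G α)

instance : Inhabited (PartialEdgeColoring G α) :=
  ⟨{ color := fun _ _ => none
     symm := fun _ _ => rfl
     adj := fun _ _ _ h => nomatch h
     proper := fun _ _ _ _ h => nomatch h }⟩

def Missing (c : α) (u : V) : Prop := ∀ v, C.color u v ≠ some c

def uncolored : Set (V × V) := {p | G.Adj p.1 p.2 ∧ C.color p.1 p.2 = none}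

lemma color_self (u : V) : C.color u u = none :=
  Option.eq_none_iff_forall_ne_some.2 fun _ h => G.irrefl (C.adj h)

lemma exists_missing [Fintype α] (u : V) [Fintype (G.neighborSet u)]
    (h : G.degree u < Fintype.card α) : ∃ c, C.Missing c u := by
  by_contra! hall
  simp only [Missing, not_forall, not_not] at hall
  choose f hf using hall
  have hinj : Function.Injective fun c => (⟨f c, C.adj (hf c)⟩ : G.neighborSet u) :=
    fun c₁ c₂ h => Option.some_injective _ <| (hf c₁).symm.trans <|
      (congrArg (C.color u ∘ Subtype.val) h).trans (hf c₂)
  have := Fintype.card_le_of_injective _ hinj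
  rw [card_neighborSet_eq_degree] at this
  omega

section Recolor

variable {C} {x y : V} {c : α}

lemma Missing.of_mem_sym2 {u : V} (hx : C.Missing c x) (hy : C.Missing c y)
    (hu : u ∈ s(x, y)) : C.Missing c u := by
  rcases Sym2.mem_iff.1 hu with rfl | rfl <;> assumption

variable (C) in
open Classical in
noncomputable def recolor (x y : V) (c : α) (hxy : G.Adj x y) (hx : C.Missing c x)
    (hy : C.Missing c y) : PartialEdgeColoring G α where
  color u v := if s(u, v) = s(x, y) then some c else C.color u v
  symm u v := by rw [Sym2.eq_swap, C.symm]
  adj u v d h := by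
    split_ifs at h with huv
    · rwa [← mem_edgeSet, huv]
    · exact C.adj h
  proper u v w d hv hw := by
    split_ifs at hv hw with h₁ h₂ h₂
    · exact Sym2.congr_right.1 (h₁.trans h₂.symm)
    · cases hv
      exact (hx.of_mem_sym2 hy (h₁ ▸ Sym2.mem_mk_left u v) w hw).elim
    · cases hw
      exact (hx.of_mem_sym2 hy (h₂ ▸ Sym2.mem_mk_left u w) v hv).elim
    · exact C.proper hv hw

variable {hxy : G.Adj x y} {hx : C.Missing c x} {hy : C.Missing c y}

lemma recolor_color : (C.recolor x y c hxy hx hy).color x y = some c :=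
  if_pos rfl

lemma recolor_color_of_ne {u v : V} (hux : u ≠ x) (huy : u ≠ y) :
    (C.recolor x y c hxy hx hy).color u v = C.color u v :=
  if_neg fun h => by
    rcases Sym2.mem_iff.1 (h ▸ Sym2.mem_mk_left u v) with rfl | rfl <;> contradiction

lemma recolor_color_left_of_ne {v : V} (hv : v ≠ y) :
    (C.recolor x y c hxy hx hy).color x v = C.color x v :=
  if_neg (mt Sym2.congr_right.1 hv)

lemma missing_recolor_iff {u : V} (hux : u ≠ x) (huy : u ≠ y) {d : α} :
    (C.recolor x y c hxy hx hy).Missing d u ↔ C.Missing d u :=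
  forall_congr' fun _ => by rw [recolor_color_of_ne hux huy]

lemma missing_recolor_left {d : α} (hd : C.color x y = some d) :
    (C.recolor x y c hxy hx hy).Missing d x := by
  intro v hv
  by_cases hvy : v = y
  · subst hvy
    obtain rfl : c = d := Option.some_injective _ (recolor_color.symm.trans hv)
    exact hx v hd
  · rw [recolor_color_left_of_ne hvy] at hv
    exact hvy (C.proper hv hd)

lemma uncolored_recolor_subset :
    (C.recolor x y c hxy hx hy).uncolored ⊆ C.uncolored \ {(x, y)} := by
  rintro ⟨u, v⟩ ⟨huv, hnone⟩
  have hne : s(u, v) ≠ s(x, y) := fun h => by simp [recolor, h] at hnone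
  refine ⟨⟨huv, (if_neg hne).symm.trans hnone⟩, fun h => hne ?_⟩
  simp only [Set.mem_singleton_iff, Prod.mk.injEq] at h
  rw [h.1, h.2]

end Recolor

section Permute

lemma map_color_eq_of_notMem {S : Set V} {σ : Equiv.Perm α}
    (hS : ∀ ⦃u v c⦄, u ∈ S → C.color u v = some c → σ c ≠ c → v ∈ S) {u v : V}
    (hu : u ∈ S) (hv : v ∉ S) :
    (C.color u v).map σ = C.color u v := by
  cases h : C.color u v with
  | none => rfl
  | some c => exact congrArg some (not_not.1 fun hc => hv (hS hu h hc))

open Classical in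
noncomputable def permuteOn (S : Set V) (σ : Equiv.Perm α)
    (hS : ∀ ⦃u v c⦄, u ∈ S → C.color u v = some c → σ c ≠ c → v ∈ S) :
    PartialEdgeColoring G α where
  color u v := if u ∈ S then (C.color u v).map σ else C.color u v
  symm u v := by
    by_cases hu : u ∈ S <;> by_cases hv : v ∈ S <;> simp only [hu, hv, if_true, if_false]
    · rw [C.symm]
    · rw [C.map_color_eq_of_notMem hS hu hv, C.symm]
    · rw [C.map_color_eq_of_notMem hS hv hu, C.symm]
    · rw [C.symm]
  adj u v d h := by
    split_ifs at h
    · obtain ⟨c, hc, -⟩ := Option.map_eq_some_iff.1 h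
      exact C.adj hc
    · exact C.adj h
  proper u v w d hv hw := by
    split_ifs at hv hw
    · rw [Option.map_eq_some_iff] at hv hw
      obtain ⟨c, hc, rfl⟩ := hv
      obtain ⟨c', hc', hcc'⟩ := hw
      exact C.proper hc (σ.injective hcc' ▸ hc')
    · exact C.proper hv hw

variable {S : Set V} {σ : Equiv.Perm α}
  {hS : ∀ ⦃u v c⦄, u ∈ S → C.color u v = some c → σ c ≠ c → v ∈ S} {u v : V}

lemma permuteOn_color_of_mem (hu : u ∈ S) :
    (C.permuteOn S σ hS).color u v = (C.color u v).map σ := if_pos hu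

lemma permuteOn_color_of_notMem (hu : u ∉ S) :
    (C.permuteOn S σ hS).color u v = C.color u v := if_neg hu

lemma missing_permuteOn_iff_of_mem (hu : u ∈ S) {c : α} :
    (C.permuteOn S σ hS).Missing c u ↔ C.Missing (σ.symm c) u :=
  forall_congr' fun v => not_congr <| by
    rw [permuteOn_color_of_mem C hu]
    cases C.color u v <;> simp [← Equiv.eq_symm_apply]

lemma missing_permuteOn_iff_of_notMem (hu : u ∉ S) {c : α} :
    (C.permuteOn S σ hS).Missing c u ↔ C.Missing c u :=
  forall_congr' fun v => by rw [permuteOn_color_of_notMem C hu]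

lemma missing_permuteOn_iff_of_fixed {c : α} (hc : σ c = c) :
    (C.permuteOn S σ hS).Missing c u ↔ C.Missing c u := by
  by_cases hu : u ∈ S
  · rw [missing_permuteOn_iff_of_mem C hu, σ.symm_apply_eq.2 hc.symm]
  · exact missing_permuteOn_iff_of_notMem C hu

lemma uncolored_permuteOn : (C.permuteOn S σ hS).uncolored = C.uncolored := by
  ext ⟨u, v⟩
  by_cases hu : u ∈ S
  · simp [uncolored, permuteOn_color_of_mem C hu]
  · simp [uncolored, permuteOn_color_of_notMem C hu]

end Permute

def kempeGraph (a b : α) : SimpleGraph V where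
  Adj u v := C.color u v = some a ∨ C.color u v = some b
  symm := ⟨fun u v => by simp only [C.symm u v, imp_self]⟩
  loopless := ⟨fun u => by simp [C.color_self]⟩

instance [DecidableEq α] (a b : α) : DecidableRel (C.kempeGraph a b).Adj :=
  fun _ _ => instDecidableOr

section Kempe

variable [DecidableEq α] {a b : α}

lemma degree_kempeGraph_le [Fintype V] (u : V) {T : Finset α}
    (hT : ∀ v c, C.color u v = some c → c = a ∨ c = b → c ∈ T) :
    (C.kempeGraph a b).degree u ≤ #T := by
  have hcolor : ∀ v, (C.kempeGraph a b).Adj u v →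
      ∃ c ∈ T, C.color u v = some c := by
    rintro v (h | h)
    exacts [⟨a, hT v a h (.inl rfl), h⟩, ⟨b, hT v b h (.inr rfl), h⟩]
  rw [← card_neighborFinset_eq_degree]
  refine card_le_card_of_injOn (fun v => (C.color u v).getD a) (fun v hv => ?_)
    fun v hv w hw hvw => ?_
  · obtain ⟨c, hcT, hc⟩ := hcolor v ((mem_neighborFinset _ _ _).1 hv)
    simpa [hc] using hcT
  · obtain ⟨c, -, hc⟩ := hcolor v ((mem_neighborFinset _ _ _).1 hv)
    obtain ⟨d, -, hd⟩ := hcolor w ((mem_neighborFinset _ _ _).1 hw)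
    simp only [hc, hd, Option.getD_some] at hvw
    exact C.proper hc (hvw ▸ hd)

lemma degree_kempeGraph_le_two [Fintype V] (u : V) : (C.kempeGraph a b).degree u ≤ 2 :=
  (C.degree_kempeGraph_le u (T := {a, b}) (by rintro _ _ _ (rfl | rfl) <;> simp)).trans
    card_le_two

lemma degree_kempeGraph_le_one [Fintype V] {u : V} (h : C.Missing a u ∨ C.Missing b u) :
    (C.kempeGraph a b).degree u ≤ 1 := by
  rcases h with h | h
  · refine C.degree_kempeGraph_le u (T := {b}) ?_
    rintro v _ hc (rfl | rfl)
    exacts [(h v hc).elim, mem_singleton_self _]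
  · refine C.degree_kempeGraph_le u (T := {a}) ?_
    rintro v _ hc (rfl | rfl)
    exacts [mem_singleton_self _, (h v hc).elim]

lemma mem_supp_of_swap_apply_ne (K : (C.kempeGraph a b).ConnectedComponent)
    {u v : V} {c : α} (hu : u ∈ K.supp) (hc : C.color u v = some c)
    (hsw : Equiv.swap a b c ≠ c) : v ∈ K.supp := by
  refine K.mem_supp_of_adj_mem_supp hu ?_
  by_cases hca : c = a
  · exact .inl (hca ▸ hc)
  by_cases hcb : c = b
  · exact .inr (hcb ▸ hc)
  exact (hsw (Equiv.swap_apply_of_ne_of_ne hca hcb)).elim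

lemma notMem_supp_of_missing [Fintype V] {K : (C.kempeGraph a b).ConnectedComponent}
    {u v w : V} (huv : u ≠ v) (huw : u ≠ w) (hvw : v ≠ w)
    (hu : C.Missing a u ∨ C.Missing b u) (hv : C.Missing a v ∨ C.Missing b v)
    (hw : C.Missing a w ∨ C.Missing b w) (huK : u ∈ K.supp) (hvK : v ∈ K.supp) :
    w ∉ K.supp := by
  classical
  intro hwK
  have := K.card_le_two_of_degree_le_one C.degree_kempeGraph_le_two (T := {u, v, w}) <| by
    simp only [mem_insert, mem_singleton]
    rintro z (rfl | rfl | rfl)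
    exacts [⟨huK, C.degree_kempeGraph_le_one hu⟩, ⟨hvK, C.degree_kempeGraph_le_one hv⟩,
      ⟨hwK, C.degree_kempeGraph_le_one hw⟩]
  rw [card_eq_three.2 ⟨u, v, w, huv, huw, hvw, rfl⟩] at this
  omega

noncomputable def kempeSwap (K : (C.kempeGraph a b).ConnectedComponent) :
    PartialEdgeColoring G α :=
  C.permuteOn K.supp (Equiv.swap a b) fun _ _ _ => C.mem_supp_of_swap_apply_ne K

end Kempe

structure IsFan (x : V) (y : ℕ → V) (k : ℕ) : Prop where
  adj : ∀ i ≤ k, G.Adj x (y i)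
  injOn : Set.InjOn y (Set.Iic k)
  color_zero : C.color x (y 0) = none
  exists_missing : ∀ i < k, ∃ c, C.color x (y (i + 1)) = some c ∧ C.Missing c (y i)

namespace IsFan

variable {C} {x : V} {y : ℕ → V} {k : ℕ}

lemma mono (hf : C.IsFan x y k) {j : ℕ} (hj : j ≤ k) : C.IsFan x y j where
  adj i hi := hf.adj i (hi.trans hj)
  injOn := hf.injOn.mono (Set.Iic_subset_Iic.2 hj)
  color_zero := hf.color_zero
  exists_missing i hi := hf.exists_missing i (hi.trans_le hj)

lemma update (hf : C.IsFan x y k) {z : V} (hz : ∀ i ≤ k, y i ≠ z) {c : α}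
    (hc : C.color x z = some c) (hck : C.Missing c (y k)) :
    C.IsFan x (Function.update y (k + 1) z) (k + 1) := by
  have hy : ∀ i ≤ k, Function.update y (k + 1) z i = y i :=
    fun i hi => Function.update_of_ne (by omega) _ _
  refine ⟨fun i hi => ?_, fun i hi j hj hij => ?_, ?_, fun i hi => ?_⟩
  · rcases hi.lt_or_eq with hi | rfl
    · exact hy i (by omega) ▸ hf.adj i (by omega)
    · simpa using C.adj hc
  · simp only [Set.mem_Iic] at hi hj
    rcases hi.lt_or_eq with hi | rfl <;> rcases hj.lt_or_eq with hj | rfl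
    · rw [hy i (by omega), hy j (by omega)] at hij
      exact hf.injOn (Set.mem_Iic.2 (by omega)) (Set.mem_Iic.2 (by omega)) hij
    · simp only [Function.update_self, hy i (by omega)] at hij
      exact (hz i (by omega) hij).elim
    · simp only [Function.update_self, hy j (by omega)] at hij
      exact (hz j (by omega) hij.symm).elim
    · rfl
  · rw [hy 0 (by omega)]
    exact hf.color_zero
  · rcases (Nat.lt_succ_iff.1 hi).lt_or_eq with hi | rfl
    · rw [hy i (by omega), hy (i + 1) (by omega)]
      exact hf.exists_missing i hi
    · rw [hy i le_rfl, Function.update_self]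
      exact ⟨c, hc, hck⟩

lemma exists_shift (hf : C.IsFan x y k) {β : α} (hx : C.Missing β x) (hy : C.Missing β (y k)) :
    ∃ C' : PartialEdgeColoring G α, C'.uncolored ⊆ C.uncolored \ {(x, y 0)} := by
  induction k generalizing C β with
  | zero => exact ⟨C.recolor x (y 0) β (hf.adj 0 le_rfl) hx hy, uncolored_recolor_subset⟩
  | succ k ih =>
    obtain ⟨c, hc, hck⟩ := hf.exists_missing k (Nat.lt_succ_self k)
    set C₁ := C.recolor x (y (k + 1)) β (hf.adj _ le_rfl) hx hy
    have hne : ∀ i ≤ k, y i ≠ y (k + 1) := fun i hi =>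
      hf.injOn.ne (Set.mem_Iic.2 (by omega)) (Set.mem_Iic.2 le_rfl) (by omega)
    have hxne : ∀ i ≤ k + 1, y i ≠ x := fun i hi => (G.ne_of_adj (hf.adj i hi)).symm
    have hf₁ : C₁.IsFan x y k := by
      refine ⟨fun i hi => hf.adj i (by omega), hf.injOn.mono (Set.Iic_subset_Iic.2 (by omega)),
        ?_, fun i hi => ?_⟩
      · rw [recolor_color_left_of_ne (hne 0 (by omega))]
        exact hf.color_zero
      · obtain ⟨d, hd, hdi⟩ := hf.exists_missing i (by omega)
        refine ⟨d, (recolor_color_left_of_ne (hne _ (by omega))).trans hd, ?_⟩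
        exact (missing_recolor_iff (hxne i (by omega)) (hne i (by omega))).2 hdi
    obtain ⟨C', hC'⟩ := ih hf₁ (missing_recolor_left hc)
      ((missing_recolor_iff (hxne k (by omega)) (hne k le_rfl)).2 hck)
    exact ⟨C', hC'.trans (Set.sdiff_subset_sdiff_left
      (uncolored_recolor_subset.trans Set.sdiff_subset))⟩

lemma kempeSwap [DecidableEq α] (hf : C.IsFan x y k)
    {a b : α} {K : (C.kempeGraph a b).ConnectedComponent} (hx : x ∈ K.supp)
    (ha : C.Missing a x) (hb : ∀ i < k, C.color x (y (i + 1)) = some b → y i ∈ K.supp) :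
    (C.kempeSwap K).IsFan x y k := by
  unfold PartialEdgeColoring.kempeSwap
  refine ⟨hf.adj, hf.injOn, ?_, fun i hi => ?_⟩
  · rw [permuteOn_color_of_mem C hx, hf.color_zero, Option.map_none]
  obtain ⟨c, hc, hci⟩ := hf.exists_missing i hi
  have hca : c ≠ a := fun h => ha _ (h ▸ hc)
  by_cases hcb : c = b
  · subst hcb
    refine ⟨a, by simp [permuteOn_color_of_mem C hx, hc], ?_⟩
    rw [missing_permuteOn_iff_of_mem C (hb i hi hc)]
    simpa using hci
  · have hfix : Equiv.swap a b c = c := Equiv.swap_apply_of_ne_of_ne hca hcb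
    refine ⟨c, by simp [permuteOn_color_of_mem C hx, hc, hfix], ?_⟩
    rw [missing_permuteOn_iff_of_fixed C hfix]
    exact hci

end IsFan

lemma exists_maximal_fan [Fintype V] {x y₀ : V} (hxy : G.Adj x y₀) (h0 : C.color x y₀ = none) :
    ∃ y k, y 0 = y₀ ∧ C.IsFan x y k ∧
      ∀ z c, C.color x z = some c → C.Missing c (y k) → ∃ i ≤ k, y i = z := by
  classical
  let P k := ∃ y : ℕ → V, y 0 = y₀ ∧ C.IsFan x y k
  have hP0 : P 0 := ⟨fun _ => y₀, rfl, fun _ _ => hxy, fun i hi j hj _ => by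
    rw [Set.mem_Iic, Nat.le_zero] at hi hj; rw [hi, hj], h0, fun _ h => (Nat.not_lt_zero _ h).elim⟩
  have hbound : ∀ k, P k → k ≤ Fintype.card V := by
    rintro k ⟨y, -, hf⟩
    have := card_le_card_of_injOn y (s := range (k + 1)) (t := univ)
      (fun _ _ => mem_coe.2 (mem_univ _))
      (fun i hi j hj h => hf.injOn (by simpa [Nat.lt_succ_iff] using hi)
        (by simpa [Nat.lt_succ_iff] using hj) h)
    simp only [card_range, card_univ] at this
    omega
  obtain ⟨y, rfl, hf⟩ := Nat.findGreatest_spec (Nat.zero_le _) hP0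
  refine ⟨y, _, rfl, hf, fun z c hc hck => ?_⟩
  by_contra! hz
  have hext : P _ := ⟨_, by simp, hf.update hz hc hck⟩
  exact Nat.findGreatest_is_greatest (Nat.lt_succ_self _) (hbound _ hext) hext

theorem exists_uncolored_subset_diff [Fintype V] [DecidableRel G.Adj] [Fintype α]
    (hdeg : ∀ v, G.degree v < Fintype.card α) {x y₀ : V} (hxy : G.Adj x y₀)
    (h0 : C.color x y₀ = none) :
    ∃ C' : PartialEdgeColoring G α, C'.uncolored ⊆ C.uncolored \ {(x, y₀)} := by
  classical
  obtain ⟨y, k, rfl, hf, hmax⟩ := C.exists_maximal_fan hxy h0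
  obtain ⟨a, ha⟩ := C.exists_missing x (hdeg x)
  obtain ⟨b, hb⟩ := C.exists_missing (y k) (hdeg _)
  by_cases hbx : C.Missing b x
  · exact hf.exists_shift hbx hb
  obtain ⟨z, hz⟩ : ∃ z, C.color x z = some b := by simpa [Missing] using hbx
  obtain ⟨j, hjk, rfl⟩ := hmax z b hz hb
  obtain ⟨i, rfl⟩ : ∃ i, j = i + 1 :=
    Nat.exists_eq_succ_of_ne_zero fun h => by simp [h, hf.color_zero] at hz
  obtain ⟨c, hc, hbi⟩ := hf.exists_missing i hjk
  obtain rfl : b = c := Option.some_injective _ (hz.symm.trans hc)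
  have hb_unique : ∀ j ≤ k, C.color x (y j) = some b → j = i + 1 := fun j hj h =>
    hf.injOn (Set.mem_Iic.2 hj) (Set.mem_Iic.2 hjk) (C.proper h hz)
  set K := (C.kempeGraph a b).connectedComponentMk x
  have hxK : x ∈ K.supp := rfl
  -- `y 0, …, y m` is the fan that can be shifted once `a` and `b` are swapped on `K`.
  obtain ⟨m, hmk, hmK, hbm, hK⟩ : ∃ m ≤ k, y m ∉ K.supp ∧ C.Missing b (y m) ∧
      ∀ j < m, C.color x (y (j + 1)) = some b → y j ∈ K.supp := by
    by_cases hiK : y i ∈ K.supp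
    · refine ⟨k, le_rfl, ?_, hb, fun j hj hjb => ?_⟩
      · exact C.notMem_supp_of_missing (G.ne_of_adj (hf.adj i (by omega)))
          (G.ne_of_adj (hf.adj k le_rfl))
          (hf.injOn.ne (Set.mem_Iic.2 (by omega)) (Set.mem_Iic.2 le_rfl) (by omega))
          (.inl ha) (.inr hbi) (.inr hb) hxK hiK
      · obtain rfl : j = i := by have := hb_unique (j + 1) (by omega) hjb; omega
        exact hiK
    · exact ⟨i, by omega, hiK, hbi, fun j hj hjb => absurd (hb_unique (j + 1) (by omega) hjb)
        (by omega)⟩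
  obtain ⟨C', hC'⟩ := ((hf.mono hmk).kempeSwap hxK ha hK).exists_shift
    ((missing_permuteOn_iff_of_mem C hxK).2 (by simpa using ha))
    ((missing_permuteOn_iff_of_notMem C hmK).2 hbm)
  exact ⟨C', by rwa [kempeSwap, uncolored_permuteOn] at hC'⟩

theorem exists_uncolored_eq_empty [Fintype V] [DecidableRel G.Adj] [Fintype α]
    (hdeg : ∀ v, G.degree v < Fintype.card α) :
    ∃ C : PartialEdgeColoring G α, C.uncolored = ∅ := by
  obtain ⟨C, -, hmin⟩ := (measure fun C : PartialEdgeColoring G α => C.uncolored.ncard).wf.has_min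
    Set.univ ⟨default, trivial⟩
  refine ⟨C, Set.eq_empty_of_forall_notMem fun p hp => ?_⟩
  obtain ⟨C', hC'⟩ := C.exists_uncolored_subset_diff hdeg hp.1 hp.2
  exact hmin C' trivial (Set.ncard_lt_ncard (Set.ssubset_iff_sdiff_singleton.2 ⟨p, hp, hC'⟩))

end PartialEdgeColoring

theorem nonempty_lineGraph_coloring [Fintype V] (G : SimpleGraph V) [DecidableRel G.Adj]
    [Fintype α] (hdeg : ∀ v, G.degree v < Fintype.card α) : Nonempty (G.lineGraph.Coloring α) := by
  obtain ⟨C, hC⟩ := PartialEdgeColoring.exists_uncolored_eq_empty (G := G) hdeg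
  let f : Sym2 V → Option α := Sym2.lift ⟨C.color, C.symm⟩
  have hf : ∀ e ∈ G.edgeSet, (f e).isSome := by
    refine Sym2.ind fun u v huv => Option.isSome_iff_ne_none.2 fun h => ?_
    exact (Set.eq_empty_iff_forall_notMem.1 hC (u, v)) ⟨huv, h⟩
  refine ⟨Coloring.mk (fun e => (f e).get (hf e e.2)) fun {e₁ e₂} hadj heq => hadj.1 ?_⟩
  obtain ⟨v, hv₁, hv₂⟩ := hadj.2
  rcases e₁ with ⟨e₁, he₁⟩
  rcases e₂ with ⟨e₂, he₂⟩
  obtain ⟨p, rfl⟩ := Sym2.mem_iff_exists.1 hv₁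
  obtain ⟨q, rfl⟩ := Sym2.mem_iff_exists.1 hv₂
  have hpq : C.color v p = C.color v q := Option.get_inj.1 heq
  obtain ⟨c, hc⟩ := Option.isSome_iff_exists.1 (hf _ he₁)
  obtain rfl : p = q := C.proper hc (hpq ▸ hc)
  rfl

end SimpleGraph

theorem stmt_19_general {V : Type*} [Fintype V]
    (G : SimpleGraph V) [DecidableRel G.Adj]
    (L : Finset ℤ) (hL : L.card = G.maxDegree + 1) :
    ∃ c : Sym2 V → ℤ,
      (∀ e ∈ G.edgeSet, c e ∈ L) ∧
      ∀ e₁ ∈ G.edgeSet, ∀ e₂ ∈ G.edgeSet, e₁ ≠ e₂ →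
        (∃ v : V, v ∈ e₁ ∧ v ∈ e₂) → c e₁ ≠ c e₂ := by
  classical
  obtain ⟨col⟩ := G.nonempty_lineGraph_coloring (α := L) fun v => by
    rw [Fintype.card_coe, hL]
    exact Nat.lt_succ_of_le (G.degree_le_maxDegree v)
  refine ⟨fun e => if he : e ∈ G.edgeSet then col ⟨e, he⟩ else 0, fun e he => by simp [he], ?_⟩
  rintro e₁ he₁ e₂ he₂ hne ⟨v, hv₁, hv₂⟩
  simp only [dif_pos he₁, dif_pos he₂, ne_eq, Subtype.val_inj]
  exact col.valid ⟨fun h => hne (congrArg Subtype.val h), v, hv₁, hv₂⟩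

/-- Every graph `G` with maximum degree `Δ` admits a proper edge
colouring using colours from any prescribed set `L` of `Δ+1` integers: there is an
assignment of colours from `L` to the edges of `G` such that distinct edges sharing
a vertex receive distinct colours. -/
theorem stmt_19 {V : Type*} [Fintype V] [DecidableEq V]
    (G : SimpleGraph V) [DecidableRel G.Adj]
    (L : Finset ℤ) (hL : L.card = G.maxDegree + 1) :
    ∃ c : Sym2 V → ℤ,
      (∀ e ∈ G.edgeSet, c e ∈ L) ∧
      ∀ e₁ ∈ G.edgeSet, ∀ e₂ ∈ G.edgeSet, e₁ ≠ e₂ →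
        (∃ v : V, v ∈ e₁ ∧ v ∈ e₂) → c e₁ ≠ c e₂ :=
  stmt_19_general G L hL
end
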